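/- Let X be a compact uniform space and f_{0,∞} = {f_n} an equi-continuous sequence of continuous self-maps of X (i.e., for every entourage γ there is an entourage η such that (x,y) ∈ η implies (f_i^k(x), f_i^k(y)) ∈ γ for all i ≥ 0 and all compositions f_i^k of length k along the sequence). Then h(f_{0,∞}^n) = n · h(f_{0,∞}) for every n ≥ 1. -/

import Mathlib

open Filter Set
open scoped Uniformity

/-- `itr f i n = f (i+n-1) ∘ ⋯ ∘ f i`, the composition of `n` maps of the sequence `f`
starting at index `i` (so `itr f i 0 = id`). -/
def itr {X : Type*} (f : ℕ → X → X) (i : ℕ) : ℕ → X → X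
  | 0 => id
  | n + 1 => fun x => f (i + n) (itr f i n x)

/-- `E` is an `(n,γ)`-separated set for the nonautonomous system `f`. -/
def IsSep {X : Type*} (f : ℕ → X → X) (n : ℕ) (γ : Set (X × X)) (E : Set X) : Prop :=
  ∀ x ∈ E, ∀ y ∈ E, x ≠ y → ∃ j < n, (itr f 0 j x, itr f 0 j y) ∉ γ

/-- `F` `(n,γ)`-spans the set `K` for the nonautonomous system `f`. -/
def Spans {X : Type*} (f : ℕ → X → X) (n : ℕ) (γ : Set (X × X)) (F K : Set X) : Prop :=
  ∀ x ∈ K, ∃ y ∈ F, ∀ j < n, (itr f 0 j x, itr f 0 j y) ∈ γ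

/-- Maximal cardinality of an `(n,γ)`-separated subset of `Λ`. -/
noncomputable def sepCard {X : Type*} (f : ℕ → X → X) (Λ : Set X) (n : ℕ)
    (γ : Set (X × X)) : ℕ :=
  sSup {m | ∃ E : Finset X, ↑E ⊆ Λ ∧ IsSep f n γ ↑E ∧ E.card = m}

/-- Minimal cardinality of a subset of `Λ` that `(n,γ)`-spans `Λ`. -/
noncomputable def spanCard {X : Type*} (f : ℕ → X → X) (Λ : Set X) (n : ℕ)
    (γ : Set (X × X)) : ℕ :=
  sInf {m | ∃ F : Finset X, ↑F ⊆ Λ ∧ Spans f n γ ↑F Λ ∧ F.card = m}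


/-- Topological entropy of the nonautonomous system `f` on the set `Λ`, defined via
separated sets; by antitonicity in the entourage, the supremum over all entourages agrees
with the limit along the net of symmetric open entourages used in the paper. -/
noncomputable def entropy {X : Type*} [UniformSpace X] (f : ℕ → X → X) (Λ : Set X) : EReal :=
  ⨆ γ ∈ 𝓤 X, atTop.limsup fun n : ℕ =>
    ((Real.log (sepCard f Λ n γ) / n : ℝ) : EReal)

/-!
A set that is `(m, γ)`-separated for the `n`-th iterate system is `(mn, γ)`-separated for `f`,
which bounds the entropy of the iterate system by `n` times that of `f`. Conversely,
equi-continuity over time windows of length `n` gives an entourage `η` for which every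
`(mn, γ)`-separated set for `f` is `(m, η)`-separated for the iterate system. Since
`log s_N(γ)` is nondecreasing in `N`, its growth rate along the multiples of `n` is the full
growth rate, which gives the reverse inequality. Compactness and equi-continuity bound the
cardinality of every `(N, γ)`-separated set, so that `s_N(γ)` is a maximum.
-/

open scoped Topology

section

variable {X : Type*}

lemma itr_add (f : ℕ → X → X) (i a b : ℕ) (x : X) :
    itr f i (a + b) x = itr f (i + a) b (itr f i a x) := by
  induction b with
  | zero => rfl
  | succ b ih =>
    show f (i + (a + b)) (itr f i (a + b) x) = f (i + a + b) (itr f (i + a) b (itr f i a x))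
    rw [ih, Nat.add_assoc]

lemma itr_iterate (f : ℕ → X → X) (n m : ℕ) :
    itr (fun k => itr f (k * n) n) 0 m = itr f 0 (m * n) := by
  induction m with
  | zero => simp only [Nat.zero_mul]; rfl
  | succ m ih =>
    funext x
    simp only [itr, Nat.zero_add, ih, Nat.succ_mul, itr_add f 0 (m * n) n x]

lemma uniformContinuous_itr [UniformSpace X] {f : ℕ → X → X}
    (hequi : ∀ γ ∈ 𝓤 X, ∀ m : ℕ, ∃ η ∈ 𝓤 X, ∀ x y : X, (x, y) ∈ η →
      ∀ i : ℕ, ∀ k < m, (itr f i k x, itr f i k y) ∈ γ)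
    (i k : ℕ) : UniformContinuous (itr f i k) := by
  intro γ hγ
  obtain ⟨η, hη, hηγ⟩ := hequi γ hγ (k + 1)
  exact Filter.mem_map.2 <| mem_of_superset hη fun p hp => hηγ p.1 p.2 hp i k k.lt_succ_self

lemma Real.log_natCast_monotone : Monotone fun m : ℕ => Real.log m := by
  intro a b hab
  rcases a.eq_zero_or_pos with rfl | ha
  · simpa using Real.log_natCast_nonneg b
  · exact Real.log_le_log (by exact_mod_cast ha) (by exact_mod_cast hab)

section Separated

variable {f g : ℕ → X → X} {N M n m : ℕ} {γ δ : Set (X × X)} {E : Set X}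

lemma exists_card_le_of_pairwise_notMem [UniformSpace X] [CompactSpace X] {V : Set (X × X)}
    (hV : V ∈ 𝓤 X) :
    ∃ C : ℕ, ∀ E : Finset X, (E : Set X).Pairwise (fun x y => (x, y) ∉ V) → E.card ≤ C := by
  classical
  obtain ⟨W, hW, hWsymm, hWV⟩ := comp_symm_mem_uniformity_sets hV
  obtain ⟨t, ht⟩ := CompactSpace.elim_nhds_subcover (fun x => UniformSpace.ball x W)
    (fun x => UniformSpace.ball_mem_nhds x hW)
  have hcenter : ∀ e : X, ∃ c ∈ t, (c, e) ∈ W := by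
    intro e
    have he : e ∈ ⋃ x ∈ t, UniformSpace.ball x W := ht ▸ mem_univ e
    simpa [UniformSpace.ball] using he
  choose c hct hcW using hcenter
  refine ⟨t.card, fun E hE => Finset.card_le_card_of_injOn c (fun e _ => hct e) ?_⟩
  intro e he e' he' hcc
  by_contra hne
  exact hE he he' hne (hWV ⟨c e, hWsymm.symm _ _ (hcW e), hcc ▸ hcW e'⟩)

lemma bddAbove_card_isSep [UniformSpace X] [CompactSpace X] (hγ : γ ∈ 𝓤 X)
    (hf : ∀ j < N, UniformContinuous (itr f 0 j)) (Λ : Set X) :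
    BddAbove {m | ∃ E : Finset X, ↑E ⊆ Λ ∧ IsSep f N γ ↑E ∧ E.card = m} := by
  have hbowen : (⋂ j ∈ Finset.range N,
      (fun p : X × X => (itr f 0 j p.1, itr f 0 j p.2)) ⁻¹' γ) ∈ 𝓤 X :=
    (Filter.biInter_finset_mem _).2 fun j hj => hf j (Finset.mem_range.1 hj) hγ
  obtain ⟨C, hC⟩ := exists_card_le_of_pairwise_notMem hbowen
  refine ⟨C, ?_⟩
  rintro _ ⟨E, -, hE, rfl⟩
  refine hC E fun x hx y hy hxy hmem => ?_
  obtain ⟨j, hj, hjγ⟩ := hE x hx y hy hxy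
  exact hjγ (Set.mem_iInter₂.1 hmem j (Finset.mem_range.2 hj))

lemma sepCard_le_sepCard {Λ : Set X}
    (hbdd : BddAbove {m | ∃ E : Finset X, ↑E ⊆ Λ ∧ IsSep g M δ ↑E ∧ E.card = m})
    (h : ∀ E : Set X, IsSep f N γ E → IsSep g M δ E) :
    sepCard f Λ N γ ≤ sepCard g Λ M δ :=
  csSup_le_csSup hbdd ⟨0, ∅, by simp, fun x hx => by simp at hx, rfl⟩
    fun _ ⟨E, hEΛ, hE, hcard⟩ => ⟨E, hEΛ, h E hE, hcard⟩

lemma IsSep.mono (hNM : N ≤ M) (hE : IsSep f N γ E) : IsSep f M γ E := by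
  intro x hx y hy hxy
  obtain ⟨j, hj, hjγ⟩ := hE x hx y hy hxy
  exact ⟨j, hj.trans_le hNM, hjγ⟩

lemma IsSep.of_iterate (hn : 0 < n) (hE : IsSep (fun k => itr f (k * n) n) m γ E) :
    IsSep f (m * n) γ E := by
  intro x hx y hy hxy
  obtain ⟨j, hj, hjγ⟩ := hE x hx y hy hxy
  exact ⟨j * n, Nat.mul_lt_mul_of_pos_right hj hn, by rwa [itr_iterate] at hjγ⟩

lemma IsSep.iterate (hn : 0 < n)
    (hδ : ∀ x y : X, (x, y) ∈ δ → ∀ i : ℕ, ∀ k < n, (itr f i k x, itr f i k y) ∈ γ)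
    (hE : IsSep f (m * n) γ E) : IsSep (fun k => itr f (k * n) n) m δ E := by
  intro x hx y hy hxy
  obtain ⟨l, hl, hlγ⟩ := hE x hx y hy hxy
  refine ⟨l / n, (Nat.div_lt_iff_lt_mul hn).2 hl, fun hmem => hlγ ?_⟩
  rw [itr_iterate] at hmem
  have hsplit : ∀ z, itr f 0 l z = itr f (l / n * n) (l % n) (itr f 0 (l / n * n) z) := by
    intro z
    conv_lhs => rw [← Nat.div_add_mod' l n, itr_add, Nat.zero_add]
  rw [hsplit x, hsplit y]
  exact hδ _ _ hmem _ _ (Nat.mod_lt l hn)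

end Separated

section GrowthRate

variable {n : ℕ}

lemma limsup_div_eq_mul_limsup_comp_mul (u : ℕ → ℝ) (hn : 0 < n) :
    atTop.limsup (fun k : ℕ => ((u (k * n) / k : ℝ) : EReal)) =
      n * atTop.limsup (fun k : ℕ => ((u (k * n) / (k * n : ℕ) : ℝ) : EReal)) := by
  rw [← EReal.limsup_const_mul_of_nonneg_of_ne_top (Nat.cast_nonneg' n) (EReal.natCast_ne_top n)]
  congr 1
  funext k
  rw [← EReal.coe_coe_eq_natCast, ← EReal.coe_mul, Nat.cast_mul, ← mul_div_assoc,
    mul_comm (n : ℝ), mul_div_mul_right _ _ (by exact_mod_cast hn.ne')]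

lemma limsup_comp_mul_le (v : ℕ → EReal) (hn : 0 < n) :
    atTop.limsup (fun k => v (k * n)) ≤ atTop.limsup v :=
  (tendsto_atTop_mono (fun k => Nat.le_mul_of_pos_right k hn) tendsto_id).limsup_comp_le_limsup

/-- Compare each `N` with the next multiple `k n ≤ N + n` of `n`. -/
lemma limsup_div_le_limsup_comp_mul {u : ℕ → ℝ} (hmono : Monotone u) (hnonneg : ∀ N, 0 ≤ u N)
    (hn : 0 < n) :
    atTop.limsup (fun N : ℕ => ((u N / N : ℝ) : EReal)) ≤
      atTop.limsup (fun k : ℕ => ((u (k * n) / (k * n : ℕ) : ℝ) : EReal)) := by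
  refine EReal.le_of_forall_lt_iff_le.1 fun c hc => ?_
  obtain ⟨K, hK⟩ := eventually_atTop.1 (eventually_lt_of_limsup_lt hc)
  have hKc : ∀ k ≥ K, u (k * n) / (k * n : ℕ) < c := fun k hk => EReal.coe_lt_coe_iff.1 (hK k hk)
  have hc : 0 < c := (div_nonneg (hnonneg _) (Nat.cast_nonneg _)).trans_lt (hKc K le_rfl)
  have hbound : ∀ N ≥ K * n + 1, u N / N ≤ c + c * n / N := by
    intro N hN
    set k := N / n + 1
    have hkK : K ≤ k := by
      have := (Nat.le_div_iff_mul_le hn).2 (Nat.le_of_succ_le hN)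
      omega
    have hNk : N ≤ k * n := (Nat.lt_div_mul_add hn).le.trans_eq (Nat.succ_mul _ _).symm
    have hkN : k * n ≤ N + n := by
      simp only [k, Nat.succ_mul]
      exact Nat.add_le_add_right (Nat.div_mul_le_self N n) n
    have hkn : (0 : ℝ) < (k * n : ℕ) := by exact_mod_cast (Nat.succ_le_of_lt (by omega)).trans hNk
    have hN0 : (0 : ℝ) < N := by exact_mod_cast (Nat.succ_pos _).trans_le hN
    have hukn : u (k * n) < c * (k * n : ℕ) := (div_lt_iff₀ hkn).1 (hKc k hkK)
    have hkN' : ((k * n : ℕ) : ℝ) ≤ N + n := by exact_mod_cast hkN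
    rw [div_le_iff₀ hN0, add_mul, div_mul_cancel₀ _ hN0.ne']
    nlinarith [hmono hNk]
  have hlim : Tendsto (fun N : ℕ => ((c + c * n / N : ℝ) : EReal)) atTop (𝓝 c) := by
    refine (continuous_coe_real_ereal.tendsto c).comp ?_
    simpa using tendsto_const_nhds.add (tendsto_const_div_atTop_nhds_zero_nat (c * n))
  calc atTop.limsup (fun N : ℕ => ((u N / N : ℝ) : EReal))
      ≤ atTop.limsup (fun N : ℕ => ((c + c * n / N : ℝ) : EReal)) :=
        limsup_le_limsup (eventually_atTop.2 ⟨_, fun N hN => EReal.coe_le_coe_iff.2 (hbound N hN)⟩)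
    _ = c := hlim.limsup_eq

end GrowthRate

noncomputable def sepGrowth (f : ℕ → X → X) (Λ : Set X) (γ : Set (X × X)) : EReal :=
  atTop.limsup fun N : ℕ => ((Real.log (sepCard f Λ N γ) / N : ℝ) : EReal)

section Iterate

variable [UniformSpace X] [CompactSpace X] {f : ℕ → X → X} {n : ℕ} {γ : Set (X × X)}

lemma monotone_sepCard (hf : ∀ j, UniformContinuous (itr f 0 j)) (hγ : γ ∈ 𝓤 X) (Λ : Set X) :
    Monotone fun N => sepCard f Λ N γ := fun _ _ hNM =>
  sepCard_le_sepCard (bddAbove_card_isSep hγ (fun j _ => hf j) Λ) fun _ => IsSep.mono hNM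

lemma sepGrowth_iterate_le (hf : ∀ j, UniformContinuous (itr f 0 j)) (hn : 0 < n)
    (hγ : γ ∈ 𝓤 X) (Λ : Set X) :
    sepGrowth (fun k => itr f (k * n) n) Λ γ ≤ n * sepGrowth f Λ γ := by
  have hcard : ∀ m, sepCard (fun k => itr f (k * n) n) Λ m γ ≤ sepCard f Λ (m * n) γ :=
    fun m => sepCard_le_sepCard (bddAbove_card_isSep hγ (fun j _ => hf j) Λ)
      fun _ => IsSep.of_iterate hn
  calc sepGrowth (fun k => itr f (k * n) n) Λ γ
      ≤ atTop.limsup fun m : ℕ => ((Real.log (sepCard f Λ (m * n) γ) / m : ℝ) : EReal) :=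
        limsup_le_limsup (Eventually.of_forall fun m => EReal.coe_le_coe_iff.2
          (div_le_div_of_nonneg_right (Real.log_natCast_monotone (hcard m)) m.cast_nonneg))
    _ = n * atTop.limsup fun m : ℕ =>
          ((Real.log (sepCard f Λ (m * n) γ) / (m * n : ℕ) : ℝ) : EReal) :=
        limsup_div_eq_mul_limsup_comp_mul (fun N => Real.log (sepCard f Λ N γ)) hn
    _ ≤ n * sepGrowth f Λ γ := by
        gcongr
        exact limsup_comp_mul_le (fun N : ℕ => ((Real.log (sepCard f Λ N γ) / N : ℝ) : EReal)) hn

lemma exists_mul_sepGrowth_le_sepGrowth_iterate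
    (hequi : ∀ γ ∈ 𝓤 X, ∀ m : ℕ, ∃ η ∈ 𝓤 X, ∀ x y : X, (x, y) ∈ η →
      ∀ i : ℕ, ∀ k < m, (itr f i k x, itr f i k y) ∈ γ)
    (hn : 0 < n) (hγ : γ ∈ 𝓤 X) (Λ : Set X) :
    ∃ η ∈ 𝓤 X, n * sepGrowth f Λ γ ≤ sepGrowth (fun k => itr f (k * n) n) Λ η := by
  obtain ⟨η, hη, hηγ⟩ := hequi γ hγ n
  have hcard : ∀ m, sepCard f Λ (m * n) γ ≤ sepCard (fun k => itr f (k * n) n) Λ m η :=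
    fun m => sepCard_le_sepCard (bddAbove_card_isSep hη
        (fun j _ => by rw [itr_iterate]; exact uniformContinuous_itr hequi 0 _) Λ)
      fun _ => IsSep.iterate hn hηγ
  have hmono : Monotone fun N => Real.log (sepCard f Λ N γ) :=
    Real.log_natCast_monotone.comp (monotone_sepCard (uniformContinuous_itr hequi 0) hγ Λ)
  refine ⟨η, hη, ?_⟩
  calc n * sepGrowth f Λ γ
      ≤ n * atTop.limsup fun m : ℕ =>
          ((Real.log (sepCard f Λ (m * n) γ) / (m * n : ℕ) : ℝ) : EReal) := by
        gcongr
        exact limsup_div_le_limsup_comp_mul hmono (fun _ => Real.log_natCast_nonneg _) hn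
    _ = atTop.limsup fun m : ℕ => ((Real.log (sepCard f Λ (m * n) γ) / m : ℝ) : EReal) :=
        (limsup_div_eq_mul_limsup_comp_mul (fun N => Real.log (sepCard f Λ N γ)) hn).symm
    _ ≤ sepGrowth (fun k => itr f (k * n) n) Λ η :=
        limsup_le_limsup (Eventually.of_forall fun m => EReal.coe_le_coe_iff.2
          (div_le_div_of_nonneg_right (Real.log_natCast_monotone (hcard m)) m.cast_nonneg))

end Iterate

end

theorem entropy_iterate_eq_general {X : Type*} [UniformSpace X] [CompactSpace X]
    (f : ℕ → X → X)
    (hequi : ∀ γ ∈ 𝓤 X, ∀ m : ℕ, ∃ η ∈ 𝓤 X, ∀ x y : X, (x, y) ∈ η →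
      ∀ i : ℕ, ∀ k < m, (itr f i k x, itr f i k y) ∈ γ)
    (n : ℕ) (hn : 1 ≤ n) :
    entropy (fun k => itr f (k * n) n) Set.univ = (n : EReal) * entropy f Set.univ := by
  have hn' : (0 : EReal) < n := by exact_mod_cast hn
  apply le_antisymm
  · refine iSup₂_le fun γ hγ => ?_
    calc sepGrowth (fun k => itr f (k * n) n) univ γ
        ≤ n * sepGrowth f univ γ := sepGrowth_iterate_le (uniformContinuous_itr hequi 0) hn hγ univ
      _ ≤ n * entropy f univ := by gcongr; exact le_iSup₂_of_le γ hγ le_rfl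
  · rw [mul_comm, ← EReal.le_div_iff_mul_le hn' (EReal.natCast_ne_top n)]
    refine iSup₂_le fun γ hγ => ?_
    obtain ⟨η, hη, hγη⟩ := exists_mul_sepGrowth_le_sepGrowth_iterate hequi hn hγ univ
    rw [EReal.le_div_iff_mul_le hn' (EReal.natCast_ne_top n), mul_comm]
    exact hγη.trans (le_iSup₂_of_le η hη le_rfl)

/-- For an equi-continuous nonautonomous system, the entropy of the `n`-th iterate system
equals `n` times the entropy of the system. -/
theorem entropy_iterate_eq {X : Type*} [UniformSpace X] [CompactSpace X]
    (f : ℕ → X → X) (hf : ∀ k, Continuous (f k))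
    (hequi : ∀ γ ∈ 𝓤 X, ∀ m : ℕ, ∃ η ∈ 𝓤 X, ∀ x y : X, (x, y) ∈ η →
      ∀ i : ℕ, ∀ k < m, (itr f i k x, itr f i k y) ∈ γ)
    (n : ℕ) (hn : 1 ≤ n) :
    entropy (fun k => itr f (k * n) n) Set.univ = (n : EReal) * entropy f Set.univ :=
  entropy_iterate_eq_general f hequi n hn
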